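/- arXiv:2106.09284 — 6 statements merged into one kernel-verified Lean document; each statement's English description precedes it below -/
import Mathlib

section
/- Let P ⊂ ℝ^d be a d-dimensional polytope and let W be a set of vertices of P whose removal disconnects the graph G(P) of P. Then the affine span of the points of W has dimension at least d − 1. -/
/-!
Faces are the vertex sets on which a linear functional attains its maximum; maximizing
lexicographically shows that a face of a face is a face. Along the lines of the simplex method,
a vertex of a face that does not maximize a functional `ℓ` on it has an edge of the face along
which `ℓ` increases: tilt a functional exposing the vertex towards `ℓ` until another vertex with
larger `ℓ` ties with it, and recurse into the proper face where they tie.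

The theorem is proved for every face `S` by induction on its dimension. If `W ∩ S` spans at most
`dim S - 2` dimensions, choose `a ∈ S \ W` and a functional `ℓ` constant on `W ∩ S ∪ {a}` but not
on `S`. Each vertex of `S \ W` with `ℓ ≥ ℓ a` climbs along increasing edges, which avoid `W`, to
the top face of `S` in direction `ℓ`, whose graph is connected by induction; the same holds for
`-ℓ`, so everything is connected to `a`.
-/

open scoped Classical

noncomputable section

/-- The body of the polytope with vertex embedding `p`. -/
def body {V : Type} [Fintype V] {d : ℕ} (p : V → EuclideanSpace ℝ (Fin d)) :
    Set (EuclideanSpace ℝ (Fin d)) :=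
  convexHull ℝ (Set.range p)

/-- A finite vertex set `F` spans a proper (exposed) face of the polytope. -/
def IsBdryFace {V : Type} [Fintype V] {d : ℕ} (p : V → EuclideanSpace ℝ (Fin d))
    (F : Finset V) : Prop :=
  IsExposed ℝ (body p) (convexHull ℝ (p '' (F : Set V))) ∧
    convexHull ℝ (p '' (F : Set V)) ≠ body p

/-- `p` is the vertex embedding of a (not necessarily simplicial) `d`-polytope:
the points are distinct extreme points of their convex hull and affinely span `ℝ^d`. -/
structure IsPolytope {V : Type} [Fintype V] {d : ℕ}
    (p : V → EuclideanSpace ℝ (Fin d)) : Prop where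
  inj : Function.Injective p
  spans : affineSpan ℝ (Set.range p) = ⊤
  vertex : ∀ v, p v ∈ Set.extremePoints ℝ (body p)

/-- The graph of the polytope: two vertices are adjacent iff they span a proper face. -/
def polyGraph {V : Type} [Fintype V] {d : ℕ} (p : V → EuclideanSpace ℝ (Fin d)) :
    SimpleGraph V where
  Adj a b := a ≠ b ∧ IsBdryFace p {a, b}
  symm := by
    constructor
    intro a b h
    exact ⟨h.1.symm, by rw [Finset.pair_comm]; exact h.2⟩
  loopless := by constructor; intro a h; exact h.1 rfl

open Filter Topology Module

namespace Finset

variable {ι : Type*}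

def maximizers (s : Finset ι) (f : ι → ℝ) : Finset ι :=
  s.filter fun i => ∀ j ∈ s, f j ≤ f i

variable {s : Finset ι} {f g : ι → ℝ} {i j : ι}

theorem mem_maximizers : i ∈ s.maximizers f ↔ i ∈ s ∧ ∀ j ∈ s, f j ≤ f i := mem_filter

theorem maximizers_subset (s : Finset ι) (f : ι → ℝ) : s.maximizers f ⊆ s := filter_subset _ _

theorem Nonempty.maximizers (hs : s.Nonempty) (f : ι → ℝ) : (s.maximizers f).Nonempty := by
  obtain ⟨i, hi, h⟩ := s.exists_max_image f hs
  exact ⟨i, mem_maximizers.2 ⟨hi, h⟩⟩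

theorem eq_of_mem_maximizers (hi : i ∈ s.maximizers f) (hj : j ∈ s.maximizers f) : f i = f j :=
  le_antisymm ((mem_maximizers.1 hj).2 i (mem_maximizers.1 hi).1)
    ((mem_maximizers.1 hi).2 j (mem_maximizers.1 hj).1)

theorem lt_of_notMem_maximizers (hj : j ∈ s.maximizers f) (hi : i ∈ s)
    (hi' : i ∉ s.maximizers f) : f i < f j := by
  refine lt_of_le_of_ne ((mem_maximizers.1 hj).2 i hi) fun h => hi' (mem_maximizers.2 ⟨hi, ?_⟩)
  exact fun k hk => ((mem_maximizers.1 hj).2 k hk).trans h.ge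

theorem maximizers_ssubset (hi : i ∈ s) (hj : j ∈ s) (hij : f i ≠ f j) : s.maximizers f ⊂ s :=
  (maximizers_subset s f).ssubset_of_ne fun h => by
    rw [← h] at hi hj
    exact hij (eq_of_mem_maximizers hi hj)

theorem exists_pos_forall_mul_lt (s : Finset ι) (a b : ι → ℝ) (ha : ∀ i ∈ s, 0 < a i) :
    ∃ ε : ℝ, 0 < ε ∧ ∀ i ∈ s, ε * b i < a i := by
  have h : ∀ᶠ ε in 𝓝[>] (0 : ℝ), ∀ i ∈ s, ε * b i < a i := by
    refine (eventually_all_finset s).2 fun i hi => nhdsWithin_le_nhds ?_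
    exact ((continuous_mul_const (b i)).tendsto' 0 0 (zero_mul _)).eventually
      (gt_mem_nhds (ha i hi))
  obtain ⟨ε, hε, hpos⟩ := (h.and self_mem_nhdsWithin).exists
  exact ⟨ε, hpos, hε⟩

theorem exists_maximizers_maximizers_eq (s : Finset ι) (f g : ι → ℝ) :
    ∃ ε : ℝ, 0 < ε ∧ (s.maximizers f).maximizers g = s.maximizers (f + ε • g) := by
  rcases s.eq_empty_or_nonempty with rfl | hs
  · exact ⟨1, one_pos, rfl⟩
  obtain ⟨j, hj⟩ := (hs.maximizers f).maximizers g
  have hjf := maximizers_subset _ _ hj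
  obtain ⟨ε, hε, hεlt⟩ := exists_pos_forall_mul_lt (s \ s.maximizers f) (fun i => f j - f i)
    (fun i => g i - g j) fun i hi => by
      obtain ⟨his, hif⟩ := mem_sdiff.1 hi
      exact sub_pos.2 (lt_of_notMem_maximizers hjf his hif)
  have hlt : ∀ i ∈ s, i ∉ (s.maximizers f).maximizers g → (f + ε • g) i < (f + ε • g) j := by
    intro i his hig
    simp only [Pi.add_apply, Pi.smul_apply, smul_eq_mul]
    by_cases hif : i ∈ s.maximizers f
    · have := lt_of_notMem_maximizers hj hif hig
      have := eq_of_mem_maximizers hif hjf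
      nlinarith
    · have := hεlt i (mem_sdiff.2 ⟨his, hif⟩)
      linarith
  have heq : ∀ i ∈ (s.maximizers f).maximizers g, (f + ε • g) i = (f + ε • g) j := fun i hi => by
    simp only [Pi.add_apply, Pi.smul_apply, smul_eq_mul, eq_of_mem_maximizers hi hj,
      eq_of_mem_maximizers (maximizers_subset _ _ hi) hjf]
  refine ⟨ε, hε, ext fun i => ⟨fun hi => mem_maximizers.2 ⟨?_, fun k hk => ?_⟩, fun hi => ?_⟩⟩
  · exact maximizers_subset _ _ (maximizers_subset _ _ hi)
  · rw [heq i hi]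
    by_cases hk' : k ∈ (s.maximizers f).maximizers g
    · exact (heq k hk').le
    · exact (hlt k hk hk').le
  · by_contra hig
    exact (hlt i (mem_maximizers.1 hi).1 hig).not_ge
      ((mem_maximizers.1 hi).2 j (mem_maximizers.1 hjf).1)

theorem exists_mem_maximizers_add_smul {ℓ : ι → ℝ} {v w : ι} (hv : v ∈ s)
    (hg : ∀ u ∈ s, u ≠ v → g u < g v) (hw : w ∈ s) (hvw : ℓ v < ℓ w) :
    ∃ t : ℝ, ∃ w' ∈ s, ℓ v < ℓ w' ∧
      v ∈ s.maximizers (g + t • ℓ) ∧ w' ∈ s.maximizers (g + t • ℓ) := by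
  set R := s.filter fun u => ℓ v < ℓ u
  have hR : R.Nonempty := ⟨w, mem_filter.2 ⟨hw, hvw⟩⟩
  -- the first value of `t` at which some `u` with `ℓ v < ℓ u` catches up with `v`
  set ratio : ι → ℝ := fun u => (g v - g u) / (ℓ u - ℓ v)
  obtain ⟨w', hw'R, ht⟩ := R.exists_mem_eq_inf' hR ratio
  set t := R.inf' hR ratio
  obtain ⟨hw's, hw'⟩ := mem_filter.1 hw'R
  have ht0 : 0 < t := by
    rw [ht]
    exact div_pos (sub_pos.2 (hg w' hw's (by rintro rfl; exact lt_irrefl _ hw'))) (sub_pos.2 hw')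
  have hle : ∀ u ∈ s, (g + t • ℓ) u ≤ (g + t • ℓ) v := by
    intro u hu
    simp only [Pi.add_apply, Pi.smul_apply, smul_eq_mul]
    by_cases huR : ℓ v < ℓ u
    · have := R.inf'_le ratio (mem_filter.2 ⟨hu, huR⟩)
      rw [le_div_iff₀ (sub_pos.2 huR)] at this
      linarith
    · rcases eq_or_ne u v with rfl | huv
      · exact le_rfl
      have := hg u hu huv
      nlinarith
  have heq : (g + t • ℓ) w' = (g + t • ℓ) v := by
    simp only [Pi.add_apply, Pi.smul_apply, smul_eq_mul, ht, ratio]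
    field_simp [(sub_pos.2 hw').ne']
    ring
  exact ⟨t, w', hw's, hw', mem_maximizers.2 ⟨hv, hle⟩,
    mem_maximizers.2 ⟨hw's, fun u hu => (hle u hu).trans heq.ge⟩⟩

end Finset

open Finset Set in
theorem convexHull_image_maximizers {ι E : Type*} [NormedAddCommGroup E] [NormedSpace ℝ E]
    (p : ι → E) (s : Finset ι) (l : E →L[ℝ] ℝ) :
    convexHull ℝ (p '' ↑(s.maximizers (l ∘ p))) = l.toExposed (convexHull ℝ (p '' ↑s)) := by
  have hexp : IsExposed ℝ (convexHull ℝ (p '' ↑s)) (l.toExposed (convexHull ℝ (p '' ↑s))) :=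
    ContinuousLinearMap.toExposed.isExposed
  have hconv := hexp.convex (convex_convexHull ℝ _)
  apply Set.Subset.antisymm
  · refine convexHull_min ?_ hconv
    rintro _ ⟨i, hi, rfl⟩
    obtain ⟨his, hmax⟩ := mem_maximizers.1 hi
    refine ⟨subset_convexHull ℝ _ (mem_image_of_mem p his), fun y hy => ?_⟩
    refine convexHull_min ?_ (convex_halfSpace_le l.toLinearMap.isLinear (l (p i))) hy
    rintro _ ⟨j, hj, rfl⟩
    exact hmax j hj
  · -- Krein–Milman: the exposed face is the convex hull of its extreme points,
    -- which are vertices maximizing `l`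
    have hcomp := hexp.isCompact ((s.finite_toSet.image p).isCompact_convexHull ℝ)
    rw [← closure_convexHull_extremePoints hcomp hconv]
    refine closure_minimal (convexHull_mono ?_)
      ((finite_toSet _ |>.image p).isClosed_convexHull ℝ)
    intro x hx
    rw [hexp.isExtreme.extremePoints_eq] at hx
    obtain ⟨⟨-, hxmax⟩, hxext⟩ := hx
    obtain ⟨i, hi, rfl⟩ := extremePoints_convexHull_subset hxext
    exact mem_image_of_mem p <| mem_maximizers.2
      ⟨hi, fun j hj => hxmax _ (subset_convexHull ℝ _ (mem_image_of_mem p hj))⟩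

theorem vectorSpan_le_ker_of_forall_eq {k M N : Type*} [Ring k] [AddCommGroup M] [Module k M]
    [AddCommGroup N] [Module k N] (f : M →ₗ[k] N) {s : Set M}
    (h : ∀ x ∈ s, ∀ y ∈ s, f x = f y) : vectorSpan k s ≤ LinearMap.ker f := by
  rw [vectorSpan_def, Submodule.span_le]
  rintro _ ⟨x, hx, y, hy, rfl⟩
  simp [h x hx y hy]

open Finset Set in
theorem finrank_vectorSpan_image_maximizers_lt {ι E : Type*} [NormedAddCommGroup E]
    [NormedSpace ℝ E] [FiniteDimensional ℝ E] (p : ι → E) (l : E →L[ℝ] ℝ) {s : Finset ι}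
    {i j : ι} (hi : i ∈ s) (hj : j ∈ s) (hij : l (p i) ≠ l (p j)) :
    finrank ℝ (vectorSpan ℝ (p '' ↑(s.maximizers (l ∘ p)))) <
      finrank ℝ (vectorSpan ℝ (p '' ↑s)) := by
  refine Submodule.finrank_lt_finrank_of_lt (lt_of_le_of_lt (le_inf
    (vectorSpan_mono ℝ (image_mono (coe_subset.2 (maximizers_subset s _))))
    (vectorSpan_le_ker_of_forall_eq (l : E →ₗ[ℝ] ℝ) ?_)) (inf_lt_left.2 fun hle => hij ?_))
  · rintro _ ⟨x, hx, rfl⟩ _ ⟨y, hy, rfl⟩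
    simpa using eq_of_mem_maximizers (f := l ∘ p) hx hy
  · have := hle (vsub_mem_vectorSpan ℝ (mem_image_of_mem p hi) (mem_image_of_mem p hj))
    simpa [sub_eq_zero] using this

theorem Submodule.exists_ne_zero_apply_eq_zero {K M : Type*} [Field K] [AddCommGroup M]
    [Module K M] {U : Submodule K M} [FiniteDimensional K U] (hU : 2 ≤ finrank K U)
    (l : M →ₗ[K] K) : ∃ x ∈ U, x ≠ 0 ∧ l x = 0 := by
  have hrank := LinearMap.finrank_range_add_finrank_ker (l ∘ₗ U.subtype)
  have hrange : finrank K (LinearMap.range (l ∘ₗ U.subtype)) ≤ 1 :=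
    (Submodule.finrank_le _).trans (finrank_self K).le
  obtain ⟨x, hx, hx0⟩ := Submodule.exists_mem_ne_zero_of_ne_bot
    (p := LinearMap.ker (l ∘ₗ U.subtype)) fun h => by
      rw [h, finrank_bot] at hrank
      omega
  exact ⟨x, x.2, by simpa using hx0, hx⟩

open Set in
theorem exists_apply_eq_of_finrank_vectorSpan_add_one_lt {ι E : Type*}
    [NormedAddCommGroup E] [InnerProductSpace ℝ E] [FiniteDimensional ℝ E] (p : ι → E)
    {s t : Set ι} (hts : t ⊆ s) {a : ι} (ha : a ∈ s)
    (h : finrank ℝ (vectorSpan ℝ (p '' t)) + 1 < finrank ℝ (vectorSpan ℝ (p '' s))) :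
    ∃ l : E →L[ℝ] ℝ, (∀ z ∈ t, l (p z) = l (p a)) ∧ ∃ z ∈ s, l (p z) ≠ l (p a) := by
  set K := vectorSpan ℝ (insert (p a) (p '' t))
  set U := vectorSpan ℝ (p '' s)
  have hKU : K ≤ U := vectorSpan_mono ℝ (insert_subset (mem_image_of_mem p ha) (image_mono hts))
  have hKlt : finrank ℝ K < finrank ℝ U :=
    (finrank_vectorSpan_insert_le_set ℝ _ _).trans_lt h
  obtain ⟨c, hc, hc0⟩ := Submodule.exists_mem_ne_zero_of_ne_bot (p := Kᗮ ⊓ U) fun hbot => by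
    have := Submodule.finrank_add_inf_finrank_orthogonal hKU
    rw [hbot, finrank_bot] at this
    omega
  obtain ⟨hcK, hcU⟩ := Submodule.mem_inf.1 hc
  refine ⟨innerSL ℝ c, fun z hz => ?_, ?_⟩
  · have hmem : p z -ᵥ p a ∈ K :=
      vsub_mem_vectorSpan ℝ (mem_insert_of_mem _ (mem_image_of_mem p hz)) (mem_insert _ _)
    have := (Submodule.mem_orthogonal' K c).1 hcK _ hmem
    rw [vsub_eq_sub, inner_sub_right, sub_eq_zero] at this
    simpa using this
  · by_contra! hconst
    have hle := vectorSpan_le_ker_of_forall_eq ((innerSL ℝ c : E →L[ℝ] ℝ) : E →ₗ[ℝ] ℝ)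
      (s := p '' s) (by
        rintro _ ⟨x, hx, rfl⟩ _ ⟨y, hy, rfl⟩
        simp only [ContinuousLinearMap.coe_coe, hconst x hx, hconst y hy])
    exact hc0 (by simpa using hle hcU)

theorem SimpleGraph.preconnected_of_forall_exists_adj_lt {V : Type*} [Finite V]
    {G : SimpleGraph V} (f : V → ℝ) (M : Set V) (hM : ∀ x ∈ M, ∀ y ∈ M, G.Reachable x y)
    (h : ∀ x ∉ M, ∃ y, G.Adj x y ∧ f x < f y) : G.Preconnected := by
  have : IsTrans V fun x y => f y < f x := ⟨fun _ _ _ h₁ h₂ => h₂.trans h₁⟩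
  have : Std.Irrefl fun x y : V => f y < f x := ⟨fun _ => lt_irrefl _⟩
  have hwf := Finite.wellFounded_of_trans_of_irrefl fun x y : V => f y < f x
  have hreach : ∀ x, ∃ m ∈ M, G.Reachable x m := fun x =>
    hwf.induction (C := fun x => ∃ m ∈ M, G.Reachable x m) x fun x ih => by
    by_cases hx : x ∈ M
    · exact ⟨x, hx, .rfl⟩
    obtain ⟨y, hxy, hlt⟩ := h x hx
    obtain ⟨m, hm, hym⟩ := ih y hlt
    exact ⟨m, hm, hxy.reachable.trans hym⟩
  intro x y
  obtain ⟨m, hm, hxm⟩ := hreach x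
  obtain ⟨m', hm', hym'⟩ := hreach y
  exact hxm.trans ((hM m hm m' hm').trans hym'.symm)

open Finset

section Polytope

variable {V : Type} [Fintype V] {d : ℕ} {p : V → EuclideanSpace ℝ (Fin d)}

def IsFace (p : V → EuclideanSpace ℝ (Fin d)) (F : Finset V) : Prop :=
  ∃ l : EuclideanSpace ℝ (Fin d) →L[ℝ] ℝ, F = univ.maximizers (l ∘ p)

theorem isFace_univ : IsFace p univ :=
  ⟨0, by ext; simp [mem_maximizers]⟩

theorem IsFace.maximizers {F : Finset V} (hF : IsFace p F)
    (l : EuclideanSpace ℝ (Fin d) →L[ℝ] ℝ) : IsFace p (F.maximizers (l ∘ p)) := by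
  obtain ⟨f, rfl⟩ := hF
  obtain ⟨ε, -, hε⟩ := univ.exists_maximizers_maximizers_eq (f ∘ p) (l ∘ p)
  exact ⟨f + ε • l, hε.trans (by congr 1)⟩

namespace IsPolytope

variable (hP : IsPolytope p)
include hP

theorem finrank_vectorSpan_range : finrank ℝ (vectorSpan ℝ (Set.range p)) = d := by
  rw [← direction_affineSpan, hP.spans, AffineSubspace.direction_top, finrank_top,
    finrank_euclideanSpace_fin]

theorem extremePoints_convexHull_image (s : Set V) :
    (convexHull ℝ (p '' s)).extremePoints ℝ = p '' s := by
  refine Set.Subset.antisymm extremePoints_convexHull_subset ?_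
  rintro _ ⟨v, hv, rfl⟩
  exact inter_extremePoints_subset_extremePoints_of_subset
    (convexHull_mono (Set.image_subset_range p s))
    ⟨subset_convexHull ℝ _ (Set.mem_image_of_mem p hv), hP.vertex v⟩

theorem isBdryFace {F : Finset V} (hF : IsFace p F) (hne : F ≠ univ) : IsBdryFace p F := by
  obtain ⟨l, hl⟩ := hF
  refine ⟨fun _ => ⟨l, ?_⟩, fun h => hne ?_⟩
  · rw [hl, convexHull_image_maximizers, coe_univ, Set.image_univ]
    rfl
  · rw [body, ← Set.image_univ] at h
    have := congrArg (Set.extremePoints ℝ) h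
    rw [hP.extremePoints_convexHull_image, hP.extremePoints_convexHull_image] at this
    exact coe_eq_univ.1 (hP.inj.image_injective this)

theorem adj_of_card_le_two {F : Finset V} (hF : IsFace p F) (hne : F ≠ univ)
    (hcard : F.card ≤ 2) {v w : V} (hv : v ∈ F) (hw : w ∈ F) (hvw : v ≠ w) :
    (polyGraph p).Adj v w := by
  have hF' : ({v, w} : Finset V) = F := eq_of_subset_of_card_le
    (insert_subset_iff.2 ⟨hv, singleton_subset_iff.2 hw⟩) (by rwa [card_pair hvw])
  exact ⟨hvw, hF' ▸ hP.isBdryFace hF hne⟩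

theorem preconnected_induce_of_card_le_two {F : Finset V} (hF : IsFace p F) (hne : F ≠ univ)
    (hcard : F.card ≤ 2) : ((polyGraph p).induce (F : Set V)).Preconnected := by
  rintro ⟨v, hv⟩ ⟨w, hw⟩
  rcases eq_or_ne v w with rfl | hvw
  · rfl
  · exact SimpleGraph.Adj.reachable (hP.adj_of_card_le_two hF hne hcard hv hw hvw)

theorem not_sbtw (x y z : V) : ¬ Sbtw ℝ (p x) (p y) (p z) := fun h =>
  h.ne_left ((hP.vertex y).2 (subset_convexHull ℝ _ (Set.mem_range_self x))
    (subset_convexHull ℝ _ (Set.mem_range_self z))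
    (by rw [openSegment_eq_image_lineMap]; exact h.mem_image_Ioo)).symm

theorem card_le_two_of_finrank_le_one {s : Finset V}
    (h : finrank ℝ (vectorSpan ℝ (p '' ↑s)) ≤ 1) : s.card ≤ 2 := by
  by_contra! hs
  obtain ⟨a, ha, b, hb, c, hc, hab, hac, hbc⟩ := two_lt_card.1 hs
  have hcol : Collinear ℝ {p a, p b, p c} := (collinear_iff_finrank_le_one.2 h).subset <| by
    simp only [Set.insert_subset_iff, Set.singleton_subset_iff]
    exact ⟨Set.mem_image_of_mem p ha, Set.mem_image_of_mem p hb, Set.mem_image_of_mem p hc⟩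
  have hne : ∀ {x y : V}, x ≠ y → p x ≠ p y := hP.inj.ne
  rcases hcol.wbtw_or_wbtw_or_wbtw with h' | h' | h'
  · exact hP.not_sbtw a b c ⟨h', hne hab.symm, hne hbc⟩
  · exact hP.not_sbtw b c a ⟨h', hne hbc.symm, hne hac.symm⟩
  · exact hP.not_sbtw c a b ⟨h', hne hac, hne hab⟩

theorem exists_forall_lt (S : Finset V) (v : V) :
    ∃ g : EuclideanSpace ℝ (Fin d) →L[ℝ] ℝ, ∀ u ∈ S, u ≠ v → g (p u) < g (p v) := by
  have hnot : p v ∉ convexHull ℝ (p '' ↑(S.erase v)) := fun hmem =>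
    ((convex_convexHull ℝ _).mem_extremePoints_iff_mem_sdiff_convexHull_sdiff.1
      (hP.vertex v)).2 <| convexHull_mono (by
        rintro _ ⟨u, hu, rfl⟩
        exact ⟨subset_convexHull ℝ _ (Set.mem_range_self u),
          fun h => (mem_erase.1 hu).1 (hP.inj h)⟩) hmem
  obtain ⟨g, c, hg, hc⟩ := geometric_hahn_banach_closed_point (convex_convexHull ℝ _)
    (((S.erase v).finite_toSet.image p).isClosed_convexHull ℝ) hnot
  exact ⟨g, fun u hu huv => (hg _ (subset_convexHull ℝ _
    (Set.mem_image_of_mem p (mem_erase.2 ⟨huv, hu⟩)))).trans hc⟩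

theorem exists_forall_lt_and_apply_ne_zero (S : Finset V) (v : V)
    {x : EuclideanSpace ℝ (Fin d)} (hx : x ≠ 0) :
    ∃ g : EuclideanSpace ℝ (Fin d) →L[ℝ] ℝ,
      (∀ u ∈ S, u ≠ v → g (p u) < g (p v)) ∧ g x ≠ 0 := by
  obtain ⟨g, hg⟩ := hP.exists_forall_lt S v
  by_cases hgx : g x = 0
  swap
  · exact ⟨g, hg, hgx⟩
  obtain ⟨ε, hε, hεlt⟩ := (S.erase v).exists_pos_forall_mul_lt (fun u => g (p v) - g (p u))
    (fun u => inner ℝ x (p u) - inner ℝ x (p v))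
    fun u hu => sub_pos.2 (hg u (mem_of_mem_erase hu) (ne_of_mem_erase hu))
  refine ⟨g + ε • innerSL ℝ x, fun u hu huv => ?_, ?_⟩
  · have := hεlt u (mem_erase.2 ⟨huv, hu⟩)
    simp only [add_apply, smul_apply, coe_innerSL_apply, smul_eq_mul]
    linarith
  · simp [hgx, hε.ne', hx]

theorem exists_adj_apply_lt {S : Finset V} (hS : IsFace p S)
    (hS' : S ≠ univ ∨ 2 ≤ finrank ℝ (vectorSpan ℝ (p '' ↑S)))
    (ℓ : EuclideanSpace ℝ (Fin d) →L[ℝ] ℝ) {v w : V} (hv : v ∈ S) (hw : w ∈ S)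
    (hvw : ℓ (p v) < ℓ (p w)) : ∃ u ∈ S, (polyGraph p).Adj v u ∧ ℓ (p v) < ℓ (p u) := by
  induction S using Finset.strongInduction generalizing w with
  | H S ih =>
  by_cases hdim : finrank ℝ (vectorSpan ℝ (p '' ↑S)) ≤ 1
  · have hne : S ≠ univ := hS'.resolve_right (by omega)
    exact ⟨w, hw, hP.adj_of_card_le_two hS hne (hP.card_le_two_of_finrank_le_one hdim) hv hw
      (by rintro rfl; exact lt_irrefl _ hvw), hvw⟩
  -- Tilt a functional exposing `v` towards `ℓ` until a better vertex `w'` ties with `v`. The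
  -- tie face is proper because, on a direction `x` of `S` killed by `ℓ`, the tilt equals `g x ≠ 0`.
  obtain ⟨x, hxS, hx0, hℓx⟩ :=
    Submodule.exists_ne_zero_apply_eq_zero (U := vectorSpan ℝ (p '' ↑S)) (by omega)
      (ℓ : EuclideanSpace ℝ (Fin d) →ₗ[ℝ] ℝ)
  obtain ⟨g, hg, hgx⟩ := hP.exists_forall_lt_and_apply_ne_zero S v hx0
  obtain ⟨t, w', hw'S, hvw', hvT, hw'T⟩ :=
    S.exists_mem_maximizers_add_smul (g := g ∘ p) (ℓ := ℓ ∘ p) hv hg hw hvw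
  set F := g + t • ℓ
  have hFp : ⇑F ∘ p = ⇑g ∘ p + t • (⇑ℓ ∘ p) := by
    ext
    simp [F]
  rw [← hFp] at hvT hw'T
  have hT : S.maximizers (F ∘ p) ⊂ S := by
    refine (maximizers_subset _ _).ssubset_of_ne fun hTS => hgx ?_
    have := vectorSpan_le_ker_of_forall_eq (F : EuclideanSpace ℝ (Fin d) →ₗ[ℝ] ℝ)
      (s := p '' ↑S) (by
        rintro _ ⟨y, hy, rfl⟩ _ ⟨z, hz, rfl⟩
        rw [← hTS, mem_coe] at hy hz
        simpa using eq_of_mem_maximizers hy hz) hxS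
    simpa [F, hℓx] using this
  obtain ⟨u, huT, hadj, hlt⟩ := ih _ hT (hS.maximizers F)
    (Or.inl (hT.trans_subset (subset_univ S)).ne) hvT hw'T hvw'
  exact ⟨u, maximizers_subset _ _ huT, hadj, hlt⟩

theorem reachable_of_le_apply {S : Finset V} (hS : IsFace p S)
    (hS' : S ≠ univ ∨ 2 ≤ finrank ℝ (vectorSpan ℝ (p '' ↑S)))
    (ℓ : EuclideanSpace ℝ (Fin d) →L[ℝ] ℝ)
    (htop : ((polyGraph p).induce ↑(S.maximizers (ℓ ∘ p))).Preconnected) {W : Set V} {c : ℝ}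
    (hW : ∀ w ∈ S, w ∈ W → ℓ (p w) ≤ c) (hc : ∃ z ∈ S, c < ℓ (p z)) {x y : V}
    (hx : x ∈ ↑S \ W) (hy : y ∈ ↑S \ W) (hxc : c ≤ ℓ (p x)) (hyc : c ≤ ℓ (p y)) :
    ((polyGraph p).induce (↑S \ W)).Reachable ⟨x, hx⟩ ⟨y, hy⟩ := by
  set X : Set V := {u | u ∈ S ∧ u ∉ W ∧ c ≤ ℓ (p u)}
  have hXS : X ⊆ ↑S \ W := fun u hu => ⟨hu.1, hu.2.1⟩
  obtain ⟨z, hzS, hz⟩ := hc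
  have hTX : ↑(S.maximizers (ℓ ∘ p)) ⊆ X := fun u hu => by
    obtain ⟨huS, hmax⟩ := mem_maximizers.1 hu
    have hzu : ℓ (p z) ≤ ℓ (p u) := hmax z hzS
    exact ⟨huS, fun huW => (hW u huS huW).not_gt (hz.trans_le hzu), (hz.trans_le hzu).le⟩
  -- climb along improving edges, which stay strictly above `c` and hence avoid `W`
  have hX : ((polyGraph p).induce X).Preconnected := by
    refine SimpleGraph.preconnected_of_forall_exists_adj_lt (fun u : X => ℓ (p u))
      {u | (u : V) ∈ S.maximizers (ℓ ∘ p)} ?_ ?_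
    · rintro ⟨m, hmX⟩ hm ⟨m', hm'X⟩ hm'
      exact (htop ⟨m, hm⟩ ⟨m', hm'⟩).map (SimpleGraph.induceHomOfLE _ hTX).toHom
    · rintro ⟨u, huS, huW, huc⟩ huT
      obtain ⟨w, hwS, hw⟩ : ∃ w ∈ S, ℓ (p u) < ℓ (p w) := by
        by_contra! h
        exact huT (mem_maximizers.2 ⟨huS, h⟩)
      obtain ⟨u', hu'S, hadj, hlt⟩ := hP.exists_adj_apply_lt hS hS' ℓ huS hwS hw
      exact ⟨⟨u', hu'S, fun hu'W => (hW u' hu'S hu'W).not_gt (huc.trans_lt hlt),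
        huc.trans hlt.le⟩, hadj, hlt⟩
  exact (hX ⟨x, hx.1, hx.2, hxc⟩ ⟨y, hy.1, hy.2, hyc⟩).map
    (SimpleGraph.induceHomOfLE _ hXS).toHom

theorem preconnected_induce_diff_of_apply_eq {S : Finset V} (hS : IsFace p S)
    (hS' : S ≠ univ ∨ 2 ≤ finrank ℝ (vectorSpan ℝ (p '' ↑S)))
    (htop : ∀ ℓ : EuclideanSpace ℝ (Fin d) →L[ℝ] ℝ, ∀ i ∈ S, ∀ j ∈ S, ℓ (p i) < ℓ (p j) →
      ((polyGraph p).induce ↑(S.maximizers (ℓ ∘ p))).Preconnected)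
    {W : Set V} {a : V} (ha : a ∈ ↑S \ W) (ℓ : EuclideanSpace ℝ (Fin d) →L[ℝ] ℝ)
    (hℓW : ∀ w ∈ W ∩ ↑S, ℓ (p w) = ℓ (p a)) {z : V} (hzS : z ∈ S) (hz : ℓ (p z) ≠ ℓ (p a)) :
    ((polyGraph p).induce (↑S \ W)).Preconnected := by
  have hreach : ∀ l : EuclideanSpace ℝ (Fin d) →L[ℝ] ℝ, (l = ℓ ∨ l = -ℓ) →
      ∀ i ∈ S, l (p a) < l (p i) → ∀ q (hq : q ∈ ↑S \ W), l (p a) ≤ l (p q) →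
      ((polyGraph p).induce (↑S \ W)).Reachable ⟨q, hq⟩ ⟨a, ha⟩ := by
    intro l hl i hi hai q hq haq
    refine hP.reachable_of_le_apply hS hS' l (htop l a ha.1 i hi hai) (fun w hwS hwW => ?_)
      ⟨i, hi, hai⟩ hq ha haq le_rfl
    rcases hl with rfl | rfl
    · exact (hℓW w ⟨hwW, hwS⟩).le
    · simp [hℓW w ⟨hwW, hwS⟩]
  suffices h : ∀ q (hq : q ∈ ↑S \ W),
      ((polyGraph p).induce (↑S \ W)).Reachable ⟨q, hq⟩ ⟨a, ha⟩ from
    fun ⟨q, hq⟩ ⟨q', hq'⟩ => (h q hq).trans (h q' hq').symm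
  intro q hq
  rcases lt_trichotomy (ℓ (p q)) (ℓ (p a)) with hqa | hqa | hqa
  · exact hreach (-ℓ) (.inr rfl) q hq.1 (by simpa using hqa) q hq (by simpa using hqa.le)
  · rcases hz.lt_or_gt with hza | hza
    · exact hreach (-ℓ) (.inr rfl) z hzS (by simpa using hza) q hq (by simp [hqa])
    · exact hreach ℓ (.inl rfl) z hzS hza q hq hqa.ge
  · exact hreach ℓ (.inl rfl) q hq.1 hqa q hq hqa.le

theorem preconnected_induce_diff {S : Finset V} (hS : IsFace p S) {W : Set V}
    (hW : finrank ℝ (vectorSpan ℝ (p '' (W ∩ ↑S))) + 2 ≤ finrank ℝ (vectorSpan ℝ (p '' ↑S))) :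
    ((polyGraph p).induce (↑S \ W)).Preconnected := by
  induction hn : finrank ℝ (vectorSpan ℝ (p '' ↑S)) using Nat.strong_induction_on
    generalizing S W with
  | _ n ih =>
  have htop : ∀ ℓ : EuclideanSpace ℝ (Fin d) →L[ℝ] ℝ, ∀ i ∈ S, ∀ j ∈ S, ℓ (p i) < ℓ (p j) →
      ((polyGraph p).induce ↑(S.maximizers (ℓ ∘ p))).Preconnected := by
    intro ℓ i hi j hj hij
    have hlt := finrank_vectorSpan_image_maximizers_lt p ℓ hi hj hij.ne
    have hne : S.maximizers (ℓ ∘ p) ≠ univ :=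
      ((maximizers_ssubset hi hj hij.ne).trans_subset (subset_univ S)).ne
    by_cases h2 : 2 ≤ finrank ℝ (vectorSpan ℝ (p '' ↑(S.maximizers (ℓ ∘ p))))
    · have := ih _ (hn ▸ hlt) (hS.maximizers ℓ) (W := ∅)
        (by rw [Set.empty_inter, Set.image_empty, vectorSpan_empty, finrank_bot]; omega) rfl
      rwa [Set.sdiff_empty] at this
    · exact hP.preconnected_induce_of_card_le_two (hS.maximizers ℓ) hne
        (hP.card_le_two_of_finrank_le_one (by omega))
  obtain ⟨a, haS, haW⟩ : ∃ a ∈ S, a ∉ W := by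
    by_contra! h
    rw [Set.inter_eq_right.2 fun u hu => h u hu] at hW
    omega
  obtain ⟨ℓ, hℓW, z, hzS, hz⟩ := exists_apply_eq_of_finrank_vectorSpan_add_one_lt p
    (Set.inter_subset_right (s := W)) (mem_coe.2 haS) (by omega)
  exact hP.preconnected_induce_diff_of_apply_eq hS (Or.inr (by omega)) htop ⟨haS, haW⟩ ℓ hℓW
    hzS hz

end IsPolytope

end Polytope

/-- strengthened Balinski: if removing a set `W` of vertices of a
`d`-polytope disconnects its graph, then the affine span of the points of `W` has
dimension at least `d − 1`. -/
theorem stmt4 {V : Type} [Fintype V] {d : ℕ} (p : V → EuclideanSpace ℝ (Fin d))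
    (hP : IsPolytope p) (W : Set V)
    (hdis : ¬ ((polyGraph p).induce Wᶜ).Connected) :
    d - 1 ≤ Module.finrank ℝ (vectorSpan ℝ (p '' W)) := by
  by_contra! hlt
  have hdim := hP.finrank_vectorSpan_range
  have hW : W ≠ Set.univ := by
    rintro rfl
    rw [Set.image_univ, hdim] at hlt
    omega
  have hpre := hP.preconnected_induce_diff isFace_univ (W := W)
    (by rw [coe_univ, Set.inter_univ, Set.image_univ, hdim]; omega)
  rw [coe_univ, ← Set.compl_eq_univ_sdiff] at hpre
  exact hdis ((SimpleGraph.connected_iff _).2 ⟨hpre, (Set.nonempty_compl.2 hW).to_subtype⟩)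

end
end

section
/- Let C ⊂ ℝ^d be a finite set of points whose affine span has dimension at least d − 1, and let a, b ∈ ℝ^d be points not in conv(C) such that the segment [a,b] intersects conv(C). Then there exists a subset C' ⊆ C of at most d points that are affinely independent and such that [a,b] intersects conv(C'). -/
open Finset

/-- Auxiliary: if a barycentric coordinate of `y` w.r.t. an affine basis given by a finset
vanishes, and all coordinates are nonnegative, then `y` is in the convex hull of the
remaining points. -/
lemma aux_mem_erase {d : ℕ} [DecidableEq (EuclideanSpace ℝ (Fin d))]
    (t : Finset (EuclideanSpace ℝ (Fin d)))
    (b : AffineBasis t ℝ (EuclideanSpace ℝ (Fin d)))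
    (hb : ∀ i : t, b i = (i : EuclideanSpace ℝ (Fin d)))
    (y : EuclideanSpace ℝ (Fin d)) (h0 : ∀ i, 0 ≤ b.coord i y)
    (i₀ : t) (hi₀ : b.coord i₀ y = 0) :
    y ∈ convexHull ℝ ((t.erase ↑i₀ : Finset (EuclideanSpace ℝ (Fin d))) :
      Set (EuclideanSpace ℝ (Fin d))) := by
  classical
  have hy : y = Finset.univ.centerMass (fun i => b.coord i y) b := by
    rw [← affineCombination_eq_centerMass (b.sum_coord_apply_eq_one y)]
    exact (b.affineCombination_coord_eq_self y).symm
  rw [hy, ← Finset.centerMass_filter_ne_zero]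
  apply Finset.centerMass_mem_convexHull
  · exact fun i _ => h0 i
  · rw [Finset.sum_filter_ne_zero]
    rw [b.sum_coord_apply_eq_one y]; norm_num
  · intro i hi
    simp only [Finset.mem_filter] at hi
    rw [hb i]
    refine Finset.mem_coe.2 (Finset.mem_erase.2 ⟨?_, i.2⟩)
    intro hcontra
    have heq : i = i₀ := Subtype.ext hcontra
    rw [heq] at hi
    exact hi.2 hi₀

/-- Carathéodory-type reduction: if `C ⊂ ℝ^d` is finite with affine span of
dimension at least `d − 1`, and `a, b ∉ conv(C)` are such that `[a,b]` meets `conv(C)`,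
then some affinely independent subset `C' ⊆ C` of at most `d` points already satisfies
`[a,b] ∩ conv(C') ≠ ∅`. -/
theorem stmt7 {d : ℕ} (C : Finset (EuclideanSpace ℝ (Fin d)))
    (hdim : d - 1 ≤ Module.finrank ℝ (vectorSpan ℝ (C : Set (EuclideanSpace ℝ (Fin d)))))
    (a b : EuclideanSpace ℝ (Fin d))
    (ha : a ∉ convexHull ℝ (C : Set (EuclideanSpace ℝ (Fin d))))
    (hb : b ∉ convexHull ℝ (C : Set (EuclideanSpace ℝ (Fin d))))
    (hseg : (segment ℝ a b ∩ convexHull ℝ (C : Set (EuclideanSpace ℝ (Fin d)))).Nonempty) :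
    ∃ C' : Finset (EuclideanSpace ℝ (Fin d)), C' ⊆ C ∧ C'.card ≤ d ∧
      AffineIndependent ℝ (fun x : (C' : Set (EuclideanSpace ℝ (Fin d))) => x.1) ∧
      (segment ℝ a b ∩ convexHull ℝ (C' : Set (EuclideanSpace ℝ (Fin d)))).Nonempty := by
  classical
  obtain ⟨x, hxseg, hxC⟩ := hseg
  rw [convexHull_eq_union] at hxC
  simp only [Set.mem_iUnion, exists_prop] at hxC
  obtain ⟨t, hts, hai, hxt⟩ := hxC
  by_cases hcard : t.card ≤ d
  · exact ⟨t, fun z hz => hts hz, hcard, hai, ⟨x, hxseg, hxt⟩⟩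
  -- now t.card = d + 1 and t is an affine basis of the whole space
  have hrank : Module.finrank ℝ (EuclideanSpace ℝ (Fin d)) = d := finrank_euclideanSpace_fin
  have hcard' : t.card = d + 1 := by
    have h1 := hai.card_le_finrank_succ
    have h2 : Module.finrank ℝ (vectorSpan ℝ (Set.range ((↑) : t → (EuclideanSpace ℝ (Fin d))))) ≤ d := by
      exact (Submodule.finrank_le _).trans hrank.le
    rw [Fintype.card_coe] at h1
    omega
  have htot : affineSpan ℝ (Set.range ((↑) : t → (EuclideanSpace ℝ (Fin d)))) = ⊤ := by
    rw [hai.affineSpan_eq_top_iff_card_eq_finrank_add_one, Fintype.card_coe, hrank]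
    exact hcard'
  let B : AffineBasis t ℝ (EuclideanSpace ℝ (Fin d)) := ⟨((↑) : t → (EuclideanSpace ℝ (Fin d))), hai, htot⟩
  have hBrange : Set.range (⇑B) = (t : Set (EuclideanSpace ℝ (Fin d))) := Subtype.range_coe
  have hmem_iff : ∀ z : EuclideanSpace ℝ (Fin d), z ∈ convexHull ℝ (t : Set (EuclideanSpace ℝ (Fin d))) ↔ ∀ i, 0 ≤ B.coord i z := by
    intro z
    rw [← hBrange, B.convexHull_eq_nonneg_coord]; rfl
  have hx_nonneg : ∀ i, 0 ≤ B.coord i x := (hmem_iff x).1 hxt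
  have hat : a ∉ convexHull ℝ (t : Set (EuclideanSpace ℝ (Fin d))) :=
    fun h => ha (convexHull_mono hts h)
  obtain ⟨i₁, hi₁⟩ : ∃ i, B.coord i a < 0 := by
    by_contra hcon
    push_neg at hcon
    exact hat ((hmem_iff a).2 hcon)
  -- the set of coordinates negative at a
  set I : Finset t := Finset.univ.filter (fun i => B.coord i a < 0) with hI
  have hIne : I.Nonempty := ⟨i₁, by simp [hI, hi₁]⟩
  set f : t → ℝ := fun i => B.coord i x / (B.coord i x - B.coord i a) with hf
  obtain ⟨i₀, hi₀I, hi₀min⟩ := I.exists_mem_eq_inf' hIne f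
  set τ : ℝ := f i₀ with hτ
  have hi₀a : B.coord i₀ a < 0 := (Finset.mem_filter.1 hi₀I).2
  have hDi₀ : 0 < B.coord i₀ x - B.coord i₀ a := by
    have := hx_nonneg i₀; linarith
  have hτ0 : 0 ≤ τ := div_nonneg (hx_nonneg i₀) hDi₀.le
  have hτ1 : τ < 1 := by
    rw [hτ, hf, div_lt_one hDi₀]
    linarith [hi₀a]
  set y : EuclideanSpace ℝ (Fin d) := AffineMap.lineMap x a τ with hy
  have hcoord_y : ∀ i, B.coord i y = (1 - τ) * B.coord i x + τ * B.coord i a := by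
    intro i
    rw [hy, (B.coord i).apply_lineMap, AffineMap.lineMap_apply_module]
    simp only [smul_eq_mul]
    try ring
  have hy_nonneg : ∀ i, 0 ≤ B.coord i y := by
    intro i
    rw [hcoord_y i]
    by_cases hiI : i ∈ I
    · have hia : B.coord i a < 0 := (Finset.mem_filter.1 hiI).2
      have hD : 0 < B.coord i x - B.coord i a := by have := hx_nonneg i; linarith
      have hle : τ ≤ f i := hi₀min ▸ Finset.inf'_le f hiI
      have : τ * (B.coord i x - B.coord i a) ≤ B.coord i x := by
        rw [hf] at hle
        calc τ * (B.coord i x - B.coord i a)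
            ≤ (B.coord i x / (B.coord i x - B.coord i a)) * (B.coord i x - B.coord i a) := by
              apply mul_le_mul_of_nonneg_right _ hD.le
              exact hle
          _ = B.coord i x := div_mul_cancel₀ _ hD.ne'
      nlinarith
    · have hia : 0 ≤ B.coord i a := by
        by_contra hcon; push_neg at hcon
        exact hiI (Finset.mem_filter.2 ⟨Finset.mem_univ _, hcon⟩)
      have := hx_nonneg i
      nlinarith
  have hy_i₀ : B.coord i₀ y = 0 := by
    rw [hcoord_y i₀, hτ, hf]
    field_simp
    ring
  have hy_mem : y ∈ convexHull ℝ ((t.erase ↑i₀ : Finset (EuclideanSpace ℝ (Fin d))) : Set (EuclideanSpace ℝ (Fin d))) :=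
    aux_mem_erase t B (fun _ => rfl) y hy_nonneg i₀ hy_i₀
  have hy_seg : y ∈ segment ℝ a b := by
    have hxab : segment ℝ x a ⊆ segment ℝ a b :=
      (convex_segment a b).segment_subset hxseg (left_mem_segment ℝ a b)
    apply hxab
    rw [segment_eq_image_lineMap]
    exact ⟨τ, ⟨hτ0, hτ1.le⟩, rfl⟩
  refine ⟨t.erase ↑i₀, ?_, ?_, ?_, ⟨y, hy_seg, hy_mem⟩⟩
  · exact fun z hz => hts (Finset.erase_subset _ _ hz)
  · rw [Finset.card_erase_of_mem i₀.2, hcard']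
    omega
  · have hsub : ((t.erase ↑i₀ : Finset (EuclideanSpace ℝ (Fin d))) : Set (EuclideanSpace ℝ (Fin d))) ⊆ (t : Set (EuclideanSpace ℝ (Fin d))) := by
      intro z hz; exact Finset.mem_coe.2 (Finset.erase_subset _ _ (Finset.mem_coe.1 hz))
    exact hai.mono hsub
end

section
/- Let Δ be a simplicial complex on vertex set [n], let Γ = 0 * Δ be the cone with apex 0, and let p be a d-embedding of Γ with p(0) = 0 and p(i) = (v_i, a_i) ∈ ℝ^{d-1} × ℝ with a_i ≠ 0 for i ∈ [n]. Define the (d−1)-embedding p' of Δ by p'(i) = v_i / a_i. If λ(x_0, x_1,…,x_n) = Σ_{j=0}^{k} x_0^j λ_j(x_1,…,x_n) is an affine k-stress on (Γ, p), then λ̄ := λ_0(a_1 x_1, …, a_n x_n) is an affine k-stress on (Δ, p'). -/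
open scoped Classical

noncomputable section

/-- The differential operator `∂_ℓ` associated to a linear form with coefficients `l`. -/
def Dop {W : Type} [Fintype W] (l : W → ℝ) (q : MvPolynomial W ℝ) : MvPolynomial W ℝ :=
  ∑ w : W, l w • MvPolynomial.pderiv w q

/-- An affine `k`-stress on a simplicial complex with face set `faces` and embedding `q`
into `ℝ^D`: a homogeneous degree-`k` polynomial supported on faces and annihilated by the
`D` coordinate differential operators and the all-ones operator. -/
def IsStressOn {W : Type} [Fintype W] {D : ℕ} (faces : Set (Finset W))
    (q : W → Fin D → ℝ) (k : ℕ) (lam : MvPolynomial W ℝ) : Prop :=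
  lam.IsHomogeneous k ∧
  (∀ m ∈ lam.support, m.support ∈ faces) ∧
  (∀ i : Fin D, Dop (fun w => q w i) lam = 0) ∧
  Dop (fun _ => (1 : ℝ)) lam = 0

/-- The cone `0 * Δ` over a complex `Δ` on `[n]`, with apex `none`. -/
def coneComplex {n : ℕ} (Δ : Set (Finset (Fin n))) : Set (Finset (Option (Fin n))) :=
  {F | F.eraseNone ∈ Δ}

/-- Substituting `x₀ ↦ 0` and `x_i ↦ a_i x_i`; on `λ = ∑_j x₀^j λ_j` this produces
`λ₀(a_1 x_1, …, a_n x_n)`. -/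
def coneSubst {n : ℕ} (a : Fin n → ℝ) :
    MvPolynomial (Option (Fin n)) ℝ →ₐ[ℝ] MvPolynomial (Fin n) ℝ :=
  MvPolynomial.aeval (fun w : Option (Fin n) =>
    w.elim 0 (fun i => MvPolynomial.C (a i) * MvPolynomial.X i))


open MvPolynomial in
lemma pderiv_coneSubst {n : ℕ} (a : Fin n → ℝ) (i : Fin n)
    (q : MvPolynomial (Option (Fin n)) ℝ) :
    pderiv i (coneSubst a q) = C (a i) * coneSubst a (pderiv (some i) q) := by
  induction q using MvPolynomial.induction_on with
  | C c => simp [coneSubst]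
  | add p r hp hr => simp [map_add, hp, hr, mul_add]
  | mul_X p w hp =>
    rw [map_mul, pderiv_mul, pderiv_mul, map_add, map_mul, map_mul, hp]
    cases w with
    | none => simp [coneSubst]
    | some j =>
      by_cases h : j = i
      · subst h
        simp [coneSubst, pderiv_C_mul]
        ring
      · have h1 : pderiv i (X (R := ℝ) j) = 0 := pderiv_X_of_ne (by simpa using h)
        have h2 : pderiv (some i) (X (R := ℝ) (some j)) = 0 :=
          pderiv_X_of_ne (by simpa using h)
        simp [coneSubst, pderiv_C_mul, h1, h2]
        ring

open MvPolynomial in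
lemma Dop_coneSubst {n : ℕ} (a : Fin n → ℝ) (l : Fin n → ℝ)
    (q : MvPolynomial (Option (Fin n)) ℝ) :
    Dop l (coneSubst a q) =
      coneSubst a (∑ i : Fin n, (l i * a i) • pderiv (some i) q) := by
  rw [Dop, map_sum]
  refine Finset.sum_congr rfl fun i _ => ?_
  rw [pderiv_coneSubst, map_smul, smul_eq_C_mul, smul_eq_C_mul, ← mul_assoc, ← C_mul]

open MvPolynomial Finsupp in
lemma coneSubst_monomial {n : ℕ} (a : Fin n → ℝ) (m : Option (Fin n) →₀ ℕ) (c : ℝ) :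
    coneSubst a (monomial m c) =
      if m none = 0 then
        (∏ i : Fin n, a i ^ m (some i)) • monomial (Finsupp.some m) c
      else 0 := by
  rw [coneSubst, aeval_monomial]
  split_ifs with h
  · rw [Finsupp.prod_fintype _ _ (fun w => pow_zero _), Fintype.prod_option]
    simp only [Option.elim, h, pow_zero, one_mul]
    have h1 : ∏ i : Fin n, (C (a i) * X i) ^ m (some i)
        = C (R := ℝ) (∏ i : Fin n, a i ^ m (some i)) * ∏ i : Fin n, X i ^ m (some i) := by
      simp [mul_pow, Finset.prod_mul_distrib]
    have h2 : (monomial (Finsupp.some m) c : MvPolynomial (Fin n) ℝ)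
        = C c * ∏ i : Fin n, X i ^ m (some i) := by
      rw [monomial_eq, Finsupp.prod_fintype _ _ (fun w => pow_zero _)]
      simp [Finsupp.some_apply]
    rw [h1, h2, smul_eq_C_mul, algebraMap_eq]
    ring
  · have hm : none ∈ m.support := Finsupp.mem_support_iff.mpr h
    rw [Finsupp.prod, Finset.prod_eq_zero hm (by simp [zero_pow h]), mul_zero]

/-- Cone Lemma, first part: let `Δ` be a simplicial complex on `[n]`,
`Γ = 0 * Δ`, and let `p` be a `(m+1)`-embedding of `Γ` with `p(0) = 0` and last coordinate
`a_i ≠ 0` at vertex `i`; let `p'(i) = v_i / a_i` be the induced `m`-embedding of `Δ`.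
If `λ` is an affine `k`-stress on `(Γ, p)`, then `λ₀(a_1 x_1, …, a_n x_n)` (obtained by
substituting `x₀ ↦ 0`, `x_i ↦ a_i x_i`) is an affine `k`-stress on `(Δ, p')`. -/
theorem stmt10 {n m k : ℕ} (Δ : Set (Finset (Fin n)))
    (hΔ : ∀ F ∈ Δ, ∀ G ⊆ F, G ∈ Δ)
    (p : Option (Fin n) → Fin (m + 1) → ℝ)
    (hp0 : p none = 0)
    (ha : ∀ i : Fin n, p (some i) (Fin.last m) ≠ 0)
    (lam : MvPolynomial (Option (Fin n)) ℝ)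
    (hlam : IsStressOn (coneComplex Δ) p k lam) :
    IsStressOn Δ (fun i j => p (some i) j.castSucc / p (some i) (Fin.last m)) k
      (coneSubst (fun i => p (some i) (Fin.last m)) lam) := by
  open MvPolynomial in
  obtain ⟨hhom, hsupp, hcoord, -⟩ := hlam
  set a : Fin n → ℝ := fun i => p (some i) (Fin.last m) with ha_def
  refine ⟨?_, ?_, ?_, ?_⟩
  · -- homogeneity
    have hg : ∀ w : Option (Fin n),
        (w.elim 0 (fun i => MvPolynomial.C (a i) * MvPolynomial.X i) :
          MvPolynomial (Fin n) ℝ).IsHomogeneous 1 := by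
      rintro (_ | i)
      · exact MvPolynomial.isHomogeneous_zero _ _ _
      · simpa using MvPolynomial.isHomogeneous_C_mul_X_pow (a i) i 1
    simpa [coneSubst] using hhom.aeval _ hg
  · -- supportedness
    intro m' hm'
    rw [lam.as_sum, map_sum] at hm'
    obtain ⟨μ, hμ, hμ'⟩ := Finset.mem_biUnion.mp (MvPolynomial.support_sum hm')
    rw [coneSubst_monomial] at hμ'
    split_ifs at hμ' with h0
    · have hsub := (Finsupp.support_smul.trans (MvPolynomial.support_monomial_subset)) hμ'
      have hm'eq : m' = Finsupp.some μ := Finset.mem_singleton.mp hsub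
      have hset : m'.support = μ.support.eraseNone := by
        ext i
        simp [hm'eq, Finsupp.mem_support_iff, Finset.mem_eraseNone]
      rw [hset]
      exact hsupp μ hμ
    · simp at hμ'
  · -- coordinate operators
    intro j
    rw [Dop_coneSubst]
    have key : (∑ i : Fin n,
        (p (some i) j.castSucc / a i * a i) • MvPolynomial.pderiv (some i) lam)
        = Dop (fun w => p w j.castSucc) lam := by
      rw [Dop, Fintype.sum_option]
      simp [hp0, ha_def]
      refine Finset.sum_congr rfl fun i _ => ?_
      rw [div_mul_cancel₀ _ (ha i)]
    rw [key, hcoord j.castSucc, map_zero]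
  · -- all-ones operator
    rw [Dop_coneSubst]
    have key : (∑ i : Fin n, ((1 : ℝ) * a i) • MvPolynomial.pderiv (some i) lam)
        = Dop (fun w => p w (Fin.last m)) lam := by
      rw [Dop, Fintype.sum_option]
      simp [hp0, ha_def]
    rw [key, hcoord (Fin.last m), map_zero]

end
end

section
/- Let k ≥ 2, d ≥ 2k, let P ⊂ ℝ^d be a simplicial d-polytope, and let M ⊆ V(∂P) with |M| ≥ k. Suppose there exist a (k−2)-dimensional face F ⊂ M of ∂P and an affine k-stress λ on P such that for every (k−1)-face G = F ∪ {v} of ∂P with v ∉ M, the coefficient λ_G ≤ 0, and at least one such λ_G < 0. Then M is not a face of ∂P. -/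
open scoped Classical

noncomputable section

/-- `p` is the vertex embedding of a simplicial `d`-polytope: the points are distinct
extreme points, they affinely span `ℝ^d`, and every proper exposed face is the convex hull
of an affinely independent set of vertices (a geometric simplex). -/
structure IsSimplicialPolytope {V : Type} [Fintype V] {d : ℕ}
    (p : V → EuclideanSpace ℝ (Fin d)) : Prop where
  inj : Function.Injective p
  spans : affineSpan ℝ (Set.range p) = ⊤
  vertex : ∀ v, p v ∈ Set.extremePoints ℝ (body p)
  simplicial : ∀ F : Set (EuclideanSpace ℝ (Fin d)), IsExposed ℝ (body p) F →
    F ≠ body p → ∃ W : Finset V,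
      AffineIndependent ℝ (fun w : (W : Set V) => p w) ∧ F = convexHull ℝ (p '' W)

open scoped RealInnerProductSpace

/-- `π` is the altitude vector `π_{F,G}` for `G = F ∪ {v}`: it joins the orthogonal
projection of `p v` onto the affine hull of `p(F)` to `p v`, i.e. `p v − π` lies in
`Aff(p F)` and `π` is orthogonal to the direction of `Aff(p F)`. -/
def IsAltitude {V : Type} [Fintype V] {d : ℕ} (p : V → EuclideanSpace ℝ (Fin d))
    (F : Finset V) (v : V) (π : EuclideanSpace ℝ (Fin d)) : Prop :=
  p v - π ∈ (affineSpan ℝ (p '' (F : Set V)) : Set (EuclideanSpace ℝ (Fin d))) ∧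
  ∀ w ∈ vectorSpan ℝ (p '' (F : Set V)), ⟪π, w⟫ = 0

/-- The coefficient system `lam` on `(k−1)`-faces satisfies the balancing condition of an
affine `k`-stress at every `(k−2)`-face `F` of `∂P`, with respect to the altitude vectors
`π`. -/
def IsBalancedStress {V : Type} [Fintype V] {d : ℕ} (p : V → EuclideanSpace ℝ (Fin d))
    (π : Finset V → V → EuclideanSpace ℝ (Fin d)) (k : ℕ) (lam : Finset V → ℝ) : Prop :=
  (∀ G : Finset V, ¬ IsBdryFace p G → lam G = 0) ∧
  ∀ F : Finset V, F.card = k - 1 → IsBdryFace p F →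
    ∑ v ∈ Finset.univ.filter
        (fun v => v ∉ F ∧ IsBdryFace p (insert v F)),
      lam (insert v F) • π F v = 0
/-!
If `M` were a face, an exposing functional `l` would take a constant value `α` on `p(M)` and
strictly smaller values at all other vertices. Since `l` is constant on `Aff(p F)`, it sends the
altitude `π_{F,F∪v}` to `l (p v) - α`, which vanishes for `v ∈ M` and is negative for `v ∉ M`.
Applying `l` to the balancing condition at `F` thus gives a sum of terms `λ_{F∪v} · l π_{F,F∪v}`
that are all nonnegative, one of them positive, yet add up to `0`.
-/

theorem mem_of_mem_convexHull_image {ι E : Type*} [AddCommGroup E] [Module ℝ E] {p : ι → E}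
    (hp : Function.Injective p) {v : ι}
    (hv : p v ∈ (convexHull ℝ (Set.range p)).extremePoints ℝ) {s : Set ι}
    (hs : p v ∈ convexHull ℝ (p '' s)) : v ∈ s := by
  have hext : p v ∈ (convexHull ℝ (p '' s)).extremePoints ℝ :=
    inter_extremePoints_subset_extremePoints_of_subset
      (convexHull_mono (Set.image_subset_range p s)) ⟨hs, hv⟩
  obtain ⟨w, hw, hwv⟩ := extremePoints_convexHull_subset hext
  exact hp hwv ▸ hw

theorem Finset.sum_smul_ne_zero_of_mul_apply_nonneg {ι R M : Type*} [CommRing R] [LinearOrder R]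
    [IsStrictOrderedRing R] [AddCommGroup M] [Module R M] (l : M →ₗ[R] R) {s : Finset ι}
    {a : ι → R} {x : ι → M} (hnonneg : ∀ i ∈ s, 0 ≤ a i * l (x i))
    (hpos : ∃ i ∈ s, 0 < a i * l (x i)) : ∑ i ∈ s, a i • x i ≠ 0 := by
  intro hsum
  have hzero : ∑ i ∈ s, a i * l (x i) = 0 := by
    simpa only [map_sum, map_smul, smul_eq_mul, map_zero] using congrArg l hsum
  exact (Finset.sum_pos' hnonneg hpos).ne' hzero

section

variable {V : Type} [Fintype V] {d : ℕ} {p : V → EuclideanSpace ℝ (Fin d)}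

theorem IsSimplicialPolytope.exists_functional_of_isBdryFace (hP : IsSimplicialPolytope p)
    {M : Finset V} (hM : IsBdryFace p M) (hne : M.Nonempty) :
    ∃ (l : StrongDual ℝ (EuclideanSpace ℝ (Fin d))) (α : ℝ),
      (∀ v ∈ M, l (p v) = α) ∧ ∀ v ∉ M, l (p v) < α := by
  obtain ⟨w, hw⟩ := hne
  have hmem : ∀ v ∈ M, p v ∈ convexHull ℝ (p '' (M : Set V)) := fun v hv =>
    subset_convexHull ℝ _ ⟨v, hv, rfl⟩
  obtain ⟨l, hl⟩ := hM.1 ⟨p w, hmem w hw⟩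
  have hmax : ∀ v ∈ M, ∀ y ∈ body p, l y ≤ l (p v) := fun v hv => by
    have := hmem v hv
    rw [hl] at this
    exact this.2
  have hbody : ∀ v, p v ∈ body p := fun v => subset_convexHull ℝ _ ⟨v, rfl⟩
  refine ⟨l, l (p w), fun v hv => (hmax w hw _ (hbody v)).antisymm (hmax v hv _ (hbody w)),
    fun v hvM => ?_⟩
  by_contra! hge
  have hface : p v ∈ convexHull ℝ (p '' (M : Set V)) := by
    rw [hl]
    exact ⟨hbody v, fun y hy => (hmax w hw y hy).trans hge⟩
  exact hvM (mem_of_mem_convexHull_image hP.inj (hP.vertex v) hface)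

theorem IsAltitude.apply_eq {F : Finset V} {v : V} {π : EuclideanSpace ℝ (Fin d)}
    (h : IsAltitude p F v π) {l : StrongDual ℝ (EuclideanSpace ℝ (Fin d))} {α : ℝ}
    (hl : ∀ w ∈ F, l (p w) = α) : l π = l (p v) - α := by
  have hspan : l (p v - π) = α :=
    AffineMap.eqOn_affineSpan (f := l.toLinearMap.toAffineMap) (g := AffineMap.const ℝ _ α)
      (by rintro - ⟨w, hw, rfl⟩; exact hl w hw) h.1
  rw [map_sub] at hspan
  linarith

end

theorem stmt12_general {V : Type} [Fintype V] {d k : ℕ} (hk : 2 ≤ k)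
    (p : V → EuclideanSpace ℝ (Fin d)) (hP : IsSimplicialPolytope p)
    (π : Finset V → V → EuclideanSpace ℝ (Fin d))
    (hπ : ∀ (G : Finset V) (v : V), v ∉ G → IsBdryFace p G →
      IsBdryFace p (insert v G) → IsAltitude p G v (π G v))
    (M : Finset V)
    (F : Finset V) (hFM : F ⊆ M) (hFcard : F.card = k - 1) (hFface : IsBdryFace p F)
    (lam : Finset V → ℝ) (hbal : IsBalancedStress p π k lam)
    (hsign : ∀ v : V, v ∉ M → IsBdryFace p (insert v F) → lam (insert v F) ≤ 0)
    (hneg : ∃ v : V, v ∉ M ∧ IsBdryFace p (insert v F) ∧ lam (insert v F) < 0) :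
    ¬ IsBdryFace p M := by
  intro hMface
  have hF : F.Nonempty := Finset.card_pos.mp (by omega)
  obtain ⟨l, α, hlM, hlout⟩ := hP.exists_functional_of_isBdryFace hMface (hF.mono hFM)
  have hπl : ∀ v ∉ F, IsBdryFace p (insert v F) → l (π F v) = l (p v) - α := fun v hvF hv =>
    (hπ F v hvF hFface hv).apply_eq fun w hw => hlM w (hFM hw)
  refine Finset.sum_smul_ne_zero_of_mul_apply_nonneg l.toLinearMap ?_ ?_
    (hbal.2 F hFcard hFface)
  · simp only [Finset.mem_filter, Finset.mem_univ, true_and]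
    rintro v ⟨hvF, hv⟩
    by_cases hvM : v ∈ M
    · simp [hπl v hvF hv, hlM v hvM]
    · exact mul_nonneg_of_nonpos_of_nonpos (hsign v hvM hv)
        (by simp [hπl v hvF hv, hlout v hvM |>.le])
  · obtain ⟨v, hvM, hv, hneg⟩ := hneg
    have hvF : v ∉ F := fun h => hvM (hFM h)
    refine ⟨v, by simp [hvF, hv], mul_pos_of_neg_of_neg hneg ?_⟩
    simp [hπl v hvF hv, hlout v hvM]

/-- let `k ≥ 2`, `d ≥ 2k`, `P` a simplicial `d`-polytope and `M` a vertex
set with `|M| ≥ k`. If some `(k−2)`-face `F ⊆ M` and some affine `k`-stress `λ` on `P`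
satisfy `λ_{F∪v} ≤ 0` for all faces `F ∪ {v}` with `v ∉ M`, with at least one such value
negative, then `M` is not a face of `∂P`. -/
theorem stmt12 {V : Type} [Fintype V] {d k : ℕ} (hk : 2 ≤ k) (hd : 2 * k ≤ d)
    (p : V → EuclideanSpace ℝ (Fin d)) (hP : IsSimplicialPolytope p)
    (π : Finset V → V → EuclideanSpace ℝ (Fin d))
    (hπ : ∀ (G : Finset V) (v : V), v ∉ G → IsBdryFace p G →
      IsBdryFace p (insert v G) → IsAltitude p G v (π G v))
    (M : Finset V) (hM : k ≤ M.card)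
    (F : Finset V) (hFM : F ⊆ M) (hFcard : F.card = k - 1) (hFface : IsBdryFace p F)
    (lam : Finset V → ℝ) (hbal : IsBalancedStress p π k lam)
    (hsign : ∀ v : V, v ∉ M → IsBdryFace p (insert v F) → lam (insert v F) ≤ 0)
    (hneg : ∃ v : V, v ∉ M ∧ IsBdryFace p (insert v F) ∧ lam (insert v F) < 0) :
    ¬ IsBdryFace p M :=
  stmt12_general hk p hP π hπ M F hFM hFcard hFface lam hbal hsign hneg

end
end

section
/- Let λ be an affine k-stress on a simplicial d-polytope P and let F be a (k−2)-face of ∂P. If λ_G ≥ 0 for every (k−1)-face G ⊃ F, then λ_G = 0 for every (k−1)-face G ⊃ F. -/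
/-! Let `l` be a linear functional exposing the face `conv(p F)`, so that `l < α` on the other
vertices and `l = α` on `Aff(p F)`. Each altitude vector `π_{F, F ∪ {v}}` differs from `p v` by a
point of `Aff(p F)`, hence `l(π_{F, F ∪ {v}}) = l(p v) - α < 0`. Applying `l` to the balancing
condition at `F` gives a vanishing sum of nonpositive terms `λ_{F ∪ {v}} l(π_{F, F ∪ {v}})`, so
each `λ_{F ∪ {v}}` vanishes. -/

open scoped Classical

noncomputable section

open scoped RealInnerProductSpace

theorem eq_zero_of_sum_smul_eq_zero_of_nonneg_of_neg {ι E : Type*} [AddCommGroup E]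
    [Module ℝ E] (l : E →ₗ[ℝ] ℝ) {s : Finset ι} {c : ι → ℝ} {x : ι → E}
    (hsum : ∑ i ∈ s, c i • x i = 0) (hc : ∀ i ∈ s, 0 ≤ c i) (hx : ∀ i ∈ s, l (x i) < 0) :
    ∀ i ∈ s, c i = 0 := by
  have hterms : ∑ i ∈ s, c i * l (x i) = 0 := by
    simpa only [map_sum, map_smul, smul_eq_mul, map_zero] using congrArg l hsum
  intro i hi
  have hprod := (Finset.sum_eq_zero_iff_of_nonpos fun j hj =>
    mul_nonpos_of_nonneg_of_nonpos (hc j hj) (hx j hj).le).mp hterms i hi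
  exact (mul_eq_zero.mp hprod).resolve_right (hx i hi).ne

theorem IsExposed.exists_eqOn_and_lt {E : Type*} [TopologicalSpace E] [AddCommGroup E]
    [Module ℝ E] {A C : Set E} (hAC : IsExposed ℝ A C) (hC : C.Nonempty) :
    ∃ (l : StrongDual ℝ E) (α : ℝ), (∀ x ∈ C, l x = α) ∧ ∀ x ∈ A, x ∉ C → l x < α := by
  obtain ⟨l, rfl⟩ := hAC hC
  obtain ⟨x₀, hx₀A, hx₀max⟩ := hC
  refine ⟨l, l x₀, fun x hx => le_antisymm (hx₀max x hx.1) (hx.2 x₀ hx₀A), fun x hxA hx => ?_⟩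
  obtain ⟨y, hyA, hy⟩ : ∃ y ∈ A, l x < l y := by simpa [hxA] using hx
  exact hy.trans_le (hx₀max y hyA)

theorem LinearMap.eqOn_affineSpan_of_eqOn {E : Type*} [AddCommGroup E] [Module ℝ E]
    (l : E →ₗ[ℝ] ℝ) {s : Set E} {α : ℝ} (h : ∀ x ∈ s, l x = α) :
    ∀ x ∈ affineSpan ℝ s, l x = α := by
  have hle : affineSpan ℝ s ≤ (affineSpan ℝ {α}).comap l.toAffineMap :=
    affineSpan_le.mpr fun y hy => by simp [h y hy]
  intro x hx
  simpa using hle hx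

theorem IsSimplicialPolytope.apply_notMem_convexHull_image {V : Type} [Fintype V] {d : ℕ}
    {p : V → EuclideanSpace ℝ (Fin d)} (hP : IsSimplicialPolytope p) {F : Finset V} {w : V}
    (hw : w ∉ F) : p w ∉ convexHull ℝ (p '' (F : Set V)) := by
  intro hmem
  have hsub : convexHull ℝ (p '' (F : Set V)) ⊆ body p :=
    convexHull_mono (Set.image_subset_range p _)
  obtain ⟨u, hu, hpu⟩ := extremePoints_convexHull_subset
    (inter_extremePoints_subset_extremePoints_of_subset hsub ⟨hmem, hP.vertex w⟩)
  exact hw (hP.inj hpu ▸ hu)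

theorem IsSimplicialPolytope.exists_eqOn_affineSpan_and_lt {V : Type} [Fintype V] {d : ℕ}
    {p : V → EuclideanSpace ℝ (Fin d)} (hP : IsSimplicialPolytope p) {F : Finset V}
    (hF : IsBdryFace p F) (hne : (p '' (F : Set V)).Nonempty) :
    ∃ (l : StrongDual ℝ (EuclideanSpace ℝ (Fin d))) (α : ℝ),
      (∀ x ∈ affineSpan ℝ (p '' (F : Set V)), l x = α) ∧ ∀ w, w ∉ F → l (p w) < α := by
  obtain ⟨l, α, hon, hoff⟩ := hF.1.exists_eqOn_and_lt (hne.convexHull (𝕜 := ℝ))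
  refine ⟨l, α, ?_, fun w hw => hoff _ (subset_convexHull ℝ _ (Set.mem_range_self w))
    (hP.apply_notMem_convexHull_image hw)⟩
  rw [← affineSpan_convexHull]
  exact LinearMap.eqOn_affineSpan_of_eqOn l.toLinearMap hon

theorem IsAltitude.image_nonempty {V : Type} [Fintype V] {d : ℕ}
    {p : V → EuclideanSpace ℝ (Fin d)} {F : Finset V} {v : V} {π : EuclideanSpace ℝ (Fin d)}
    (h : IsAltitude p F v π) : (p '' (F : Set V)).Nonempty :=
  (affineSpan_nonempty ℝ).mp ⟨_, h.1⟩

theorem IsAltitude.apply_eq_sub {V : Type} [Fintype V] {d : ℕ}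
    {p : V → EuclideanSpace ℝ (Fin d)} {F : Finset V} {v : V} {π : EuclideanSpace ℝ (Fin d)}
    (h : IsAltitude p F v π) (l : EuclideanSpace ℝ (Fin d) →ₗ[ℝ] ℝ) {α : ℝ}
    (hl : ∀ x ∈ affineSpan ℝ (p '' (F : Set V)), l x = α) : l π = l (p v) - α := by
  have := hl _ h.1
  rw [map_sub] at this
  linarith

theorem stmt13_general {V : Type} [Fintype V] {d k : ℕ}
    (p : V → EuclideanSpace ℝ (Fin d)) (hP : IsSimplicialPolytope p)
    (π : Finset V → V → EuclideanSpace ℝ (Fin d))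
    (hπ : ∀ (G : Finset V) (v : V), v ∉ G → IsBdryFace p G →
      IsBdryFace p (insert v G) → IsAltitude p G v (π G v))
    (lam : Finset V → ℝ) (hbal : IsBalancedStress p π k lam)
    (F : Finset V) (hFcard : F.card = k - 1) (hFface : IsBdryFace p F)
    (hsign : ∀ v : V, v ∉ F → IsBdryFace p (insert v F) → 0 ≤ lam (insert v F)) :
    ∀ v : V, v ∉ F → IsBdryFace p (insert v F) → lam (insert v F) = 0 := by
  intro v hv hvF
  obtain ⟨l, α, hlF, hlt⟩ := hP.exists_eqOn_affineSpan_and_lt hFface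
    (hπ F v hv hFface hvF).image_nonempty
  refine eq_zero_of_sum_smul_eq_zero_of_nonneg_of_neg l.toLinearMap
    (hbal.2 F hFcard hFface) (fun w hw => ?_) (fun w hw => ?_) v (by simp [hv, hvF])
  all_goals obtain ⟨-, hwF, hwface⟩ := Finset.mem_filter.mp hw
  · exact hsign w hwF hwface
  · rw [(hπ F w hwF hFface hwface).apply_eq_sub l.toLinearMap hlF]
    exact sub_neg.mpr (hlt w hwF)

/-- if `λ` is an affine `k`-stress on a simplicial `d`-polytope `P` and `F`
is a `(k−2)`-face of `∂P` such that `λ_G ≥ 0` for every `(k−1)`-face `G ⊇ F`, then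
`λ_G = 0` for every such face. -/
theorem stmt13 {V : Type} [Fintype V] {d k : ℕ} (hk : 2 ≤ k)
    (p : V → EuclideanSpace ℝ (Fin d)) (hP : IsSimplicialPolytope p)
    (π : Finset V → V → EuclideanSpace ℝ (Fin d))
    (hπ : ∀ (G : Finset V) (v : V), v ∉ G → IsBdryFace p G →
      IsBdryFace p (insert v G) → IsAltitude p G v (π G v))
    (lam : Finset V → ℝ) (hbal : IsBalancedStress p π k lam)
    (F : Finset V) (hFcard : F.card = k - 1) (hFface : IsBdryFace p F)
    (hsign : ∀ v : V, v ∉ F → IsBdryFace p (insert v F) → 0 ≤ lam (insert v F)) :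
    ∀ v : V, v ∉ F → IsBdryFace p (insert v F) → lam (insert v F) = 0 :=
  stmt13_general p hP π hπ lam hbal F hFcard hFface hsign

end
end

section
/- Let σ and τ be disjoint finite sets with |σ| = i+1 and |τ| = d−i+1 where 2 ≤ i ≤ d/2, and let P ⊂ ℝ^d be a simplicial d-polytope whose boundary complex equals ∂σ̄ * ∂τ̄ (the join of the boundaries of the simplices on σ and on τ). Then the relative interiors of conv(p(σ)) and conv(p(τ)) intersect; i.e., there exist positive reals (c_v) with Σ_{v∈σ} c_v = Σ_{v∈τ} c_v = 1 and Σ_{v∈σ} c_v p(v) = Σ_{v∈τ} c_v p(v). -/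
/-! The `d + 2` points `p v` are affinely dependent in `ℝ^d`; fix a nonzero dependence `w`. The
set where `w > 0` cannot span a face: the functional exposing that face is maximal exactly at its
vertices, and pairing it with the dependence forces `w` to vanish off the face, i.e. `w ≥ 0`,
whence `w = 0`. The same holds for `w < 0`. By the face description of the join, each of these two
disjoint sets contains `σ` or `τ`, so one contains `σ` and the other `τ`, and `|w|`, normalised,
gives the weights. -/

open scoped Classical

noncomputable section

section AffineDependence

variable {V E : Type*} [Fintype V] [AddCommGroup E] [Module ℝ E]

def IsAffineDependence (p : V → E) (w : V → ℝ) : Prop :=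
  ∑ v, w v = 0 ∧ ∑ v, w v • p v = 0

lemma IsAffineDependence.neg {p : V → E} {w : V → ℝ} (hw : IsAffineDependence p w) :
    IsAffineDependence p (-w) := by
  simp only [IsAffineDependence, Pi.neg_apply, Finset.sum_neg_distrib, neg_smul, hw.1, hw.2,
    neg_zero, and_self]

lemma exists_isAffineDependence_ne_zero [FiniteDimensional ℝ E] (p : V → E)
    (hcard : Module.finrank ℝ E + 1 < Fintype.card V) :
    ∃ w, IsAffineDependence p w ∧ w ≠ 0 := by
  have hdep : ¬ AffineIndependent ℝ p := fun h =>
    (h.card_le_finrank_succ.trans (Nat.add_le_add_right (Submodule.finrank_le _) 1)).not_gt hcard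
  rw [affineIndependent_iff_of_fintype] at hdep
  push Not at hdep
  obtain ⟨w, hsum, hvec, e, he⟩ := hdep
  rw [Finset.weightedVSub_eq_linear_combination _ hsum] at hvec
  exact ⟨w, ⟨hsum, hvec⟩, fun h => he (congrFun h e)⟩

lemma IsAffineDependence.eq_zero_of_nonneg {p : V → E} {w : V → ℝ}
    (hw : IsAffineDependence p w) (hnonneg : ∀ v, 0 ≤ w v) : w = 0 :=
  funext fun v => (Finset.sum_eq_zero_iff_of_nonneg fun v _ => hnonneg v).1 hw.1 v
    (Finset.mem_univ v)

end AffineDependence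

section Polytope

variable {V : Type} [Fintype V] {d : ℕ} {p : V → EuclideanSpace ℝ (Fin d)}

lemma IsSimplicialPolytope.mem_of_mem_convexHull (hP : IsSimplicialPolytope p) {B : Finset V}
    {v : V} (hv : p v ∈ convexHull ℝ (p '' B)) : v ∈ B := by
  have hext : p v ∈ Set.extremePoints ℝ (convexHull ℝ (p '' B)) :=
    inter_extremePoints_subset_extremePoints_of_subset
      (convexHull_mono (Set.image_subset_range _ _)) ⟨hv, hP.vertex v⟩
  obtain ⟨b, hb, hbv⟩ := extremePoints_convexHull_subset hext
  exact hP.inj hbv ▸ hb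

lemma IsAffineDependence.eq_zero_of_isExposed (hP : IsSimplicialPolytope p) {w : V → ℝ}
    (hw : IsAffineDependence p w) {B : Finset V}
    (hB : IsExposed ℝ (body p) (convexHull ℝ (p '' B))) (hnonneg : ∀ v ∉ B, 0 ≤ w v) :
    ∀ v ∉ B, w v = 0 := by
  obtain rfl | ⟨b, hb⟩ := B.eq_empty_or_nonempty
  · intro v _
    exact congrFun (hw.eq_zero_of_nonneg fun u => hnonneg u (Finset.notMem_empty u)) v
  obtain ⟨l, hl⟩ := hB ⟨p b, subset_convexHull ℝ _ (Set.mem_image_of_mem p hb)⟩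
  have hbody : ∀ v, p v ∈ body p := fun v => subset_convexHull ℝ _ (Set.mem_range_self v)
  have hmax : ∀ y ∈ body p, l y ≤ l (p b) := by
    have hpb : p b ∈ convexHull ℝ (p '' B) := subset_convexHull ℝ _ (Set.mem_image_of_mem p hb)
    rw [hl] at hpb
    exact hpb.2
  have hface : ∀ v, p v ∈ convexHull ℝ (p '' B) ↔ l (p b) ≤ l (p v) := by
    intro v
    rw [hl]
    exact ⟨fun hv => hv.2 _ (hbody b), fun h => ⟨hbody v, fun y hy => (hmax y hy).trans h⟩⟩
  have hgap : ∀ v, 0 ≤ l (p b) - l (p v) := fun v => sub_nonneg.2 (hmax _ (hbody v))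
  have hterms : ∀ v ∈ Finset.univ, 0 ≤ w v * (l (p b) - l (p v)) := by
    intro v _
    by_cases hv : v ∈ B
    · rw [le_antisymm (hmax _ (hbody v)) ((hface v).1 (subset_convexHull ℝ _
        (Set.mem_image_of_mem p hv))), sub_self, mul_zero]
    · exact mul_nonneg (hnonneg v hv) (hgap v)
  have hzero : ∑ v, w v * (l (p b) - l (p v)) = 0 := by
    simp only [mul_sub, Finset.sum_sub_distrib, ← Finset.sum_mul, hw.1, zero_mul]
    rw [zero_sub, neg_eq_zero]
    simpa only [map_sum, map_smul, smul_eq_mul, map_zero] using congrArg l hw.2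
  intro v hv
  have hlt : 0 < l (p b) - l (p v) :=
    (hgap v).lt_of_ne' fun h => hv (hP.mem_of_mem_convexHull ((hface v).2 (sub_eq_zero.1 h).le))
  exact (mul_eq_zero.1 ((Finset.sum_eq_zero_iff_of_nonneg hterms).1 hzero v
    (Finset.mem_univ v))).resolve_right hlt.ne'

lemma IsAffineDependence.not_isBdryFace_pos (hP : IsSimplicialPolytope p) {w : V → ℝ}
    (hw : IsAffineDependence p w) (hw0 : w ≠ 0) :
    ¬ IsBdryFace p (Finset.univ.filter fun v => 0 < w v) := by
  intro hface
  have hneg := hw.neg.eq_zero_of_isExposed hP hface.1 fun v hv => by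
    simpa [Finset.mem_filter] using hv
  refine hw0 (hw.eq_zero_of_nonneg fun v => ?_)
  by_cases hv : 0 < w v
  · exact hv.le
  · simpa using (hneg v (by simpa [Finset.mem_filter] using hv)).le

end Polytope

lemma IsAffineDependence.exists_pos_weights {V E : Type*} [Fintype V] [AddCommGroup E]
    [Module ℝ E] {p : V → E} {w : V → ℝ} (hw : IsAffineDependence p w) {σ τ : Finset V}
    (hdisj : Disjoint σ τ) (huniv : σ ∪ τ = Finset.univ) (hσne : σ.Nonempty)
    (hσ : ∀ v ∈ σ, 0 < w v) (hτ : ∀ v ∈ τ, w v < 0) :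
    ∃ c : V → ℝ, (∀ v, 0 < c v) ∧ (∑ v ∈ σ, c v = 1) ∧ (∑ v ∈ τ, c v = 1) ∧
      (∑ v ∈ σ, c v • p v = ∑ v ∈ τ, c v • p v) := by
  set s := ∑ v ∈ σ, w v
  have hs : 0 < s := Finset.sum_pos hσ hσne
  have hsum : s + ∑ v ∈ τ, w v = 0 := by rw [← Finset.sum_union hdisj, huniv]; exact hw.1
  have hvec : ∑ v ∈ σ, w v • p v + ∑ v ∈ τ, w v • p v = 0 := by
    rw [← Finset.sum_union hdisj, huniv]; exact hw.2
  have habsσ : ∀ v ∈ σ, |w v| = w v := fun v hv => abs_of_pos (hσ v hv)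
  have habsτ : ∀ v ∈ τ, |w v| = -w v := fun v hv => abs_of_neg (hτ v hv)
  refine ⟨fun v => |w v| / s, fun v => div_pos (abs_pos.2 ?_) hs, ?_, ?_, ?_⟩
  · have hv : v ∈ σ ∪ τ := huniv ▸ Finset.mem_univ v
    rcases Finset.mem_union.1 hv with hv | hv
    · exact (hσ v hv).ne'
    · exact (hτ v hv).ne
  · rw [← Finset.sum_div, Finset.sum_congr rfl habsσ, div_self hs.ne']
  · rw [← Finset.sum_div, Finset.sum_congr rfl habsτ, Finset.sum_neg_distrib,
      neg_eq_of_add_eq_zero_left hsum, div_self hs.ne']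
  · simp only [div_eq_inv_mul, mul_smul, ← Finset.smul_sum]
    congr 1
    rw [Finset.sum_congr (s₁ := σ) rfl fun v hv => by rw [habsσ v hv],
      Finset.sum_congr (s₁ := τ) rfl fun v hv => by rw [habsτ v hv, neg_smul],
      Finset.sum_neg_distrib, neg_eq_of_add_eq_zero_left hvec]

theorem stmt19_general {V : Type} [Fintype V] {d i : ℕ} (hd : 2 * i ≤ d)
    (σ τ : Finset V) (hdisj : Disjoint σ τ) (huniv : σ ∪ τ = Finset.univ)
    (hσ : σ.card = i + 1) (hτ : τ.card = d - i + 1)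
    (p : V → EuclideanSpace ℝ (Fin d)) (hP : IsSimplicialPolytope p)
    (hbdry : ∀ S : Finset V, IsBdryFace p S ↔ (¬ σ ⊆ S ∧ ¬ τ ⊆ S)) :
    ∃ c : V → ℝ, (∀ v, 0 < c v) ∧
      (∑ v ∈ σ, c v = 1) ∧ (∑ v ∈ τ, c v = 1) ∧
      (∑ v ∈ σ, c v • p v = ∑ v ∈ τ, c v • p v) := by
  have hcard : Module.finrank ℝ (EuclideanSpace ℝ (Fin d)) + 1 < Fintype.card V := by
    rw [finrank_euclideanSpace_fin, ← Finset.card_univ, ← huniv,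
      Finset.card_union_of_disjoint hdisj, hσ, hτ]
    omega
  obtain ⟨w, hw, hw0⟩ := exists_isAffineDependence_ne_zero p hcard
  have hcover : ∀ u, IsAffineDependence p u → u ≠ 0 →
      σ ⊆ Finset.univ.filter (fun v => 0 < u v) ∨ τ ⊆ Finset.univ.filter (fun v => 0 < u v) :=
    fun u hu hu0 => by_contra fun h => hu.not_isBdryFace_pos hP hu0 ((hbdry _).2 (not_or.1 h))
  simp only [Finset.subset_iff, Finset.mem_filter, Finset.mem_univ, true_and] at hcover
  obtain ⟨s, hs⟩ : σ.Nonempty := Finset.card_pos.1 (by omega)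
  obtain ⟨t, ht⟩ : τ.Nonempty := Finset.card_pos.1 (by omega)
  rcases hcover w hw hw0 with hσpos | hτpos <;>
    rcases hcover (-w) hw.neg (neg_ne_zero.2 hw0) with hσneg | hτneg
  · exact absurd (hσneg hs) (by simpa using (hσpos hs).le)
  · exact hw.exists_pos_weights hdisj huniv ⟨s, hs⟩ hσpos fun v hv => by simpa using hτneg hv
  · exact hw.neg.exists_pos_weights hdisj huniv ⟨s, hs⟩ hσneg fun v hv => by simpa using hτpos hv
  · exact absurd (hτneg ht) (by simpa using (hτpos ht).le)

/-- let `σ`, `τ` partition the vertex set, with `|σ| = i+1`,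
`|τ| = d−i+1`, `2 ≤ i ≤ d/2`, and let `P` be a simplicial `d`-polytope whose boundary
complex is the join `∂σ̄ * ∂τ̄` (a set of vertices spans a proper face iff it contains
neither `σ` nor `τ`). Then the relative interiors of `conv(p σ)` and `conv(p τ)`
intersect: there are positive weights with both groups summing to `1` and equal weighted
vertex sums. -/
theorem stmt19 {V : Type} [Fintype V] {d i : ℕ} (hi : 2 ≤ i) (hd : 2 * i ≤ d)
    (σ τ : Finset V) (hdisj : Disjoint σ τ) (huniv : σ ∪ τ = Finset.univ)
    (hσ : σ.card = i + 1) (hτ : τ.card = d - i + 1)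
    (p : V → EuclideanSpace ℝ (Fin d)) (hP : IsSimplicialPolytope p)
    (hbdry : ∀ S : Finset V, IsBdryFace p S ↔ (¬ σ ⊆ S ∧ ¬ τ ⊆ S)) :
    ∃ c : V → ℝ, (∀ v, 0 < c v) ∧
      (∑ v ∈ σ, c v = 1) ∧ (∑ v ∈ τ, c v = 1) ∧
      (∑ v ∈ σ, c v • p v = ∑ v ∈ τ, c v • p v) :=
  stmt19_general hd σ τ hdisj huniv hσ hτ p hP hbdry

end
end
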